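/- Let γ be a real number and suppose Q̊(ψ) ≥ γ ‖ψ‖² for every traceless symmetric bilinear form ψ on E. Then for every p ≥ 2 and every totally traceless symmetric p-multilinear map φ : E^p → ℝ, Σ_{i,j,k,l,k₃,…,k_p} R(e_i,e_j,e_k,e_l) φ(e_i,e_k,e_{k₃},…,e_{k_p}) φ(e_j,e_l,e_{k₃},…,e_{k_p}) ≤ −γ ‖φ‖². -/
import Mathlib

open scoped RealInnerProductSpace

private lemma sum5aux {α β : Type*} [Fintype α] [Fintype β] (g : α → α → α → α → β → ℝ) :
    (∑ i, ∑ j, ∑ k, ∑ l, ∑ ks, g i j k l ks)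
      = ∑ ks, ∑ j, ∑ l, ∑ i, ∑ k, g i j k l ks := by
  calc (∑ i, ∑ j, ∑ k, ∑ l, ∑ ks, g i j k l ks)
      = ∑ x : α × α × α × α × β, g x.1 x.2.1 x.2.2.1 x.2.2.2.1 x.2.2.2.2 := by
        simp [Fintype.sum_prod_type]
    _ = ∑ y : β × α × α × α × α, g y.2.2.2.1 y.2.1 y.2.2.2.2 y.2.2.1 y.1 := by
        exact Fintype.sum_equiv
          (⟨fun x => (x.2.2.2.2, x.2.1, x.2.2.2.1, x.1, x.2.2.1),
            fun y => (y.2.2.2.1, y.2.1, y.2.2.2.2, y.2.2.1, y.1),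
            fun ⟨a,b,c,d,f⟩ => rfl, fun ⟨a,b,c,d,f⟩ => rfl⟩ :
            (α × α × α × α × β) ≃ (β × α × α × α × α))
          _ _ (fun x => rfl)
    _ = ∑ ks, ∑ j, ∑ l, ∑ i, ∑ k, g i j k l ks := by
        simp [Fintype.sum_prod_type]

private lemma sumrot3 {α β : Type*} [Fintype α] [Fintype β] (g : α → α → β → ℝ) :
    (∑ ks, ∑ a, ∑ b, g a b ks) = ∑ a, ∑ b, ∑ ks, g a b ks := by
  rw [Finset.sum_comm]
  exact Finset.sum_congr rfl fun a _ => Finset.sum_comm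

theorem stmt_11
    {E : Type*} [NormedAddCommGroup E] [InnerProductSpace ℝ E]
    {n : ℕ} (hn : 2 ≤ n) (e : OrthonormalBasis (Fin n) ℝ E)
    (R : E →ₗ[ℝ] E →ₗ[ℝ] E →ₗ[ℝ] E →ₗ[ℝ] ℝ)
    (hR1 : ∀ X Y Z W : E, R X Y Z W = - R Y X Z W)
    (hR2 : ∀ X Y Z W : E, R X Y Z W = - R X Y W Z)
    (hR3 : ∀ X Y Z W : E, R X Y Z W = R Z W X Y)
    (hR4 : ∀ X Y Z W : E, R X Y Z W + R Y Z X W + R Z X Y W = 0)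
    (γ : ℝ)
    (hQ : ∀ ψ : E →ₗ[ℝ] E →ₗ[ℝ] ℝ, (∀ X Y : E, ψ X Y = ψ Y X) →
      (∑ i, ψ (e i) (e i)) = 0 →
      γ * (∑ i, ∑ j, (ψ (e i) (e j)) ^ 2) ≤
        ∑ i, ∑ j, ∑ k, ∑ l, R (e i) (e k) (e l) (e j) * ψ (e k) (e l) * ψ (e i) (e j))
    (p : ℕ)
    (φ : MultilinearMap ℝ (fun _ : Fin (p + 2) => E) ℝ)
    (hφsymm : ∀ σ : Equiv.Perm (Fin (p + 2)), ∀ v : Fin (p + 2) → E, φ (v ∘ σ) = φ v)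
    (hφtr : ∀ v : Fin p → E, (∑ i, φ (Fin.cons (e i) (Fin.cons (e i) v))) = 0) :
    (∑ i, ∑ j, ∑ k, ∑ l, ∑ ks : Fin p → Fin n,
        R (e i) (e j) (e k) (e l) *
          φ (Fin.cons (e i) (Fin.cons (e k) (fun m => e (ks m)))) *
          φ (Fin.cons (e j) (Fin.cons (e l) (fun m => e (ks m)))))
      ≤ -γ * ∑ t : Fin (p + 2) → Fin n, (φ (fun m => e (t m))) ^ 2 := by
  classical
  -- symmetry in the first two slots
  have hswap : ∀ (X Y : E) (v : Fin p → E),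
      φ (Fin.cons X (Fin.cons Y v)) = φ (Fin.cons Y (Fin.cons X v)) := by
    intro X Y v
    have h := hφsymm (Equiv.swap 0 1) (Fin.cons Y (Fin.cons X v))
    rw [← h]
    congr 1
    funext i
    refine Fin.cases ?_ (fun j => ?_) i
    · simp [Equiv.swap_apply_left, Fin.cons_zero, Fin.cons_one]
    · refine Fin.cases ?_ (fun m => ?_) j
      · simp [Fin.succ_zero_eq_one, Equiv.swap_apply_right, Fin.cons_zero, Fin.cons_one]
      · have h0 : (m.succ.succ : Fin (p+2)) ≠ 0 := Fin.succ_ne_zero _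
        have h1 : (m.succ.succ : Fin (p+2)) ≠ 1 := by
          intro hc
          have := congrArg Fin.val hc
          simp [Fin.val_succ] at this
        simp [Function.comp_apply, Equiv.swap_apply_of_ne_of_ne h0 h1, Fin.cons_succ]
  -- the key curvature estimate for each fixed tail
  have hA : ∀ ks : Fin p → Fin n,
      γ * (∑ a, ∑ b, (φ (Fin.cons (e a) (Fin.cons (e b) (fun m => e (ks m))))) ^ 2) ≤
        ∑ a, ∑ b, ∑ c, ∑ d, R (e a) (e c) (e d) (e b) *
          φ (Fin.cons (e c) (Fin.cons (e d) (fun m => e (ks m)))) *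
          φ (Fin.cons (e a) (Fin.cons (e b) (fun m => e (ks m)))) := by
    intro ks
    set w : Fin p → E := fun m => e (ks m) with hw
    let ψ : E →ₗ[ℝ] E →ₗ[ℝ] ℝ := LinearMap.mk₂ ℝ
      (fun X Y => φ (Fin.cons X (Fin.cons Y w)))
      (fun X X' Y => φ.cons_add _ X X')
      (fun c X Y => φ.cons_smul _ c X)
      (fun X Y Y' => by
        show φ (Fin.cons X (Fin.cons (Y + Y') w))
            = φ (Fin.cons X (Fin.cons Y w)) + φ (Fin.cons X (Fin.cons Y' w))
        rw [hswap X (Y + Y') w, φ.cons_add, ← hswap X Y w, ← hswap X Y' w])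
      (fun c X Y => by
        show φ (Fin.cons X (Fin.cons (c • Y) w)) = c • φ (Fin.cons X (Fin.cons Y w))
        rw [hswap X (c • Y) w, φ.cons_smul, ← hswap X Y w])
    have hψapp : ∀ X Y : E, ψ X Y = φ (Fin.cons X (Fin.cons Y w)) := fun X Y => rfl
    have := hQ ψ (fun X Y => by rw [hψapp, hψapp]; exact hswap X Y w)
      (by simp only [hψapp]; exact hφtr w)
    simpa only [hψapp, hw] using this
  -- rearrange the goal's quintuple sum
  have hrw := sum5aux (fun i j k l (ks : Fin p → Fin n) =>
      R (e i) (e j) (e k) (e l) *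
        φ (Fin.cons (e i) (Fin.cons (e k) (fun m => e (ks m)))) *
        φ (Fin.cons (e j) (Fin.cons (e l) (fun m => e (ks m)))))
  rw [hrw]
  have hneg : (∑ ks : Fin p → Fin n, ∑ j, ∑ l, ∑ i, ∑ k,
        R (e i) (e j) (e k) (e l) *
          φ (Fin.cons (e i) (Fin.cons (e k) (fun m => e (ks m)))) *
          φ (Fin.cons (e j) (Fin.cons (e l) (fun m => e (ks m)))))
      = -(∑ ks : Fin p → Fin n, ∑ a, ∑ b, ∑ c, ∑ d, R (e a) (e c) (e d) (e b) *
          φ (Fin.cons (e c) (Fin.cons (e d) (fun m => e (ks m)))) *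
          φ (Fin.cons (e a) (Fin.cons (e b) (fun m => e (ks m))))) := by
    rw [← Finset.sum_neg_distrib]
    refine Finset.sum_congr rfl fun ks _ => ?_
    rw [← Finset.sum_neg_distrib]
    refine Finset.sum_congr rfl fun a _ => ?_
    rw [← Finset.sum_neg_distrib]
    refine Finset.sum_congr rfl fun b _ => ?_
    rw [← Finset.sum_neg_distrib]
    refine Finset.sum_congr rfl fun c _ => ?_
    rw [← Finset.sum_neg_distrib]
    refine Finset.sum_congr rfl fun d _ => ?_
    rw [hR1 (e c) (e a) (e d) (e b)]
    ring
  rw [hneg]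
  have hT : (∑ t : Fin (p + 2) → Fin n, (φ (fun m => e (t m))) ^ 2)
      = ∑ ks : Fin p → Fin n, ∑ a, ∑ b,
          (φ (Fin.cons (e a) (Fin.cons (e b) (fun m => e (ks m))))) ^ 2 := by
    rw [sumrot3 (fun a b (ks : Fin p → Fin n) =>
      (φ (Fin.cons (e a) (Fin.cons (e b) (fun m => e (ks m))))) ^ 2)]
    rw [← Equiv.sum_comp (Fin.consEquiv (fun _ : Fin (p+2) => Fin n))
      (fun t => (φ (fun m => e (t m))) ^ 2)]
    rw [Fintype.sum_prod_type]
    refine Finset.sum_congr rfl fun a _ => ?_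
    rw [← Equiv.sum_comp (Fin.consEquiv (fun _ : Fin (p+1) => Fin n))
      (fun u => (φ (fun m => e ((Fin.consEquiv (fun _ : Fin (p+2) => Fin n)) (a, u) m))) ^ 2)]
    rw [Fintype.sum_prod_type]
    refine Finset.sum_congr rfl fun b _ => Finset.sum_congr rfl fun ks _ => ?_
    simp only [Fin.consEquiv_apply]
    congr 1
    congr 1
    funext m
    refine Fin.cases ?_ (fun j => ?_) m
    · rfl
    · refine Fin.cases ?_ (fun m' => ?_) j <;> rfl
  rw [hT, neg_mul, Finset.mul_sum]
  exact neg_le_neg (Finset.sum_le_sum fun ks _ => hA ks)
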